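/- arXiv:2502.03216 — 5 statements merged into one kernel-verified Lean document; each statement's English description precedes it below -/
import Mathlib

section
/- Let τ, λ ∈ ℂ with λ ≠ 0, write λ = w² for w ∈ ℂ \ {0}. The problem u'' = λu on (0,1) with boundary conditions u'(0) + τ u(1) = λ u(0) and −u'(1) − τ u(0) = λ u(1) has a nonzero solution u of the form u(x) = α e^{wx} + β e^{−wx} if and only if 2(−τ² − w² − w⁴) sinh(w) − 4 w³ cosh(w) = 0. -/
/-!
Substituting `u(x) = αe^{wx} + βe^{-wx}` turns the two boundary conditions into a homogeneous
linear system `M_w (α, β) = 0`; it has a nontrivial solution iff `det M_w = 0`, and since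
`e^w e^{-w} = 1` this determinant is `2(-τ² - w² - w⁴) sinh w - 4w³ cosh w`.
-/

open Complex Matrix

theorem exists_ne_zero_fin_two_iff {R : Type*} [Zero R] (P : (Fin 2 → R) → Prop) :
    (∃ v ≠ 0, P v) ↔ ∃ a b, (a ≠ 0 ∨ b ≠ 0) ∧ P ![a, b] := by
  constructor
  · rintro ⟨v, hv, hP⟩
    refine ⟨v 0, v 1, ?_, ?_⟩
    · simpa [funext_iff, Fin.forall_fin_two, or_iff_not_and_not] using hv
    · convert hP
      ext i
      fin_cases i <;> rfl
  · rintro ⟨a, b, hab, hP⟩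
    refine ⟨_, ?_, hP⟩
    simpa [funext_iff, Fin.forall_fin_two, or_iff_not_and_not] using hab

noncomputable def boundaryMatrix (τ w : ℂ) : Matrix (Fin 2) (Fin 2) ℂ :=
  !![w + τ * exp w - w ^ 2, -w + τ * exp (-w) - w ^ 2;
    -w * exp w - τ - w ^ 2 * exp w, w * exp (-w) - τ - w ^ 2 * exp (-w)]

theorem boundaryConditions_iff_mulVec_eq_zero (τ w α β : ℂ) :
    (let u : ℂ → ℂ := fun x => α * exp (w * x) + β * exp (-w * x)
     let u' : ℂ → ℂ := fun x => α * w * exp (w * x) - β * w * exp (-w * x)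
     u' 0 + τ * u 1 = w ^ 2 * u 0 ∧ -u' 1 - τ * u 0 = w ^ 2 * u 1) ↔
      boundaryMatrix τ w *ᵥ ![α, β] = 0 := by
  simp only [boundaryMatrix, funext_iff, Fin.forall_fin_two, mulVec, vec2_dotProduct, of_apply,
    mul_zero, exp_zero, mul_one, neg_sub, neg_mul, cons_val', cons_val_zero, cons_val_fin_one,
    cons_val_one, Pi.zero_apply]
  constructor <;> rintro ⟨h₀, h₁⟩ <;> exact ⟨by linear_combination h₀, by linear_combination h₁⟩

theorem det_boundaryMatrix (τ w : ℂ) :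
    (boundaryMatrix τ w).det = 2 * (-τ ^ 2 - w ^ 2 - w ^ 4) * sinh w - 4 * w ^ 3 * cosh w := by
  have hexp : exp w * exp (-w) = 1 := by rw [← exp_add, add_neg_cancel, exp_zero]
  rw [boundaryMatrix, det_fin_two_of]
  linear_combination
    (τ ^ 2 + w ^ 2 + w ^ 4) * two_sinh w + 2 * w ^ 3 * two_cosh w + 2 * τ * w * hexp

theorem stmt4_general (τ w : ℂ) :
    (∃ α β : ℂ, (α ≠ 0 ∨ β ≠ 0) ∧
      (let u : ℂ → ℂ := fun x => α * Complex.exp (w * x) + β * Complex.exp (-w * x)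
       let u' : ℂ → ℂ := fun x =>
         α * w * Complex.exp (w * x) - β * w * Complex.exp (-w * x)
       u' 0 + τ * u 1 = w ^ 2 * u 0 ∧ -u' 1 - τ * u 0 = w ^ 2 * u 1)) ↔
    2 * (-τ ^ 2 - w ^ 2 - w ^ 4) * Complex.sinh w - 4 * w ^ 3 * Complex.cosh w = 0 := by
  rw [← det_boundaryMatrix, ← exists_mulVec_eq_zero_iff, exists_ne_zero_fin_two_iff]
  exact exists₂_congr fun α β =>
    and_congr_right fun _ => boundaryConditions_iff_mulVec_eq_zero τ w α β

/-- The eigenvalue problem `u'' = λu` on `(0,1)` (with `λ = w² ≠ 0`) subject to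
`u'(0) + τu(1) = λu(0)` and `-u'(1) - τu(0) = λu(1)` has a nonzero solution of the
form `u(x) = αe^{wx} + βe^{-wx}` iff `2(-τ² - w² - w⁴)sinh(w) - 4w³cosh(w) = 0`. -/
theorem stmt4 (τ w : ℂ) (hw : w ≠ 0) :
    (∃ α β : ℂ, (α ≠ 0 ∨ β ≠ 0) ∧
      (let u : ℂ → ℂ := fun x => α * Complex.exp (w * x) + β * Complex.exp (-w * x)
       let u' : ℂ → ℂ := fun x =>
         α * w * Complex.exp (w * x) - β * w * Complex.exp (-w * x)
       u' 0 + τ * u 1 = w ^ 2 * u 0 ∧ -u' 1 - τ * u 0 = w ^ 2 * u 1)) ↔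
    2 * (-τ ^ 2 - w ^ 2 - w ^ 4) * Complex.sinh w - 4 * w ^ 3 * Complex.cosh w = 0 :=
  stmt4_general τ w
end

section
/- Let J = (0, μ₂) where μ₂ is the smallest positive zero of 2μ cot μ + 1 − μ² on (0, π), and let f(μ) = μ√(2μ cot μ + 1 − μ²). Then the maximizer μ_s of f on [0, μ₂] is the unique solution in J of the equation 1 = 2μ² − 3μ cot μ + μ² csc²μ, and at any critical point of f in J the derivative of f² satisfies (f²)'(μ) = −2μ(−1 + 2μ² − 3μ cot μ + μ² csc²μ). -/
/-!
On `J` the radicand `g μ = 2μ cot μ + 1 - μ²` is positive (it is positive near `0` and has no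
zero in `J`), so `f² = μ² g` is smooth there with `(f²)' = -2μ h(μ)`, where
`h(μ) = -1 + 2μ² - 3μ cot μ + μ² csc² μ`. The maximizer is an interior maximum of `f²`, hence
`h(μs) = 0`, and it is the only zero of `h` because `h` is strictly increasing on `(0, π)`:
`sin³ μ · h'(μ) = 4μ sin³ μ - 3 cos μ sin² μ + 5μ sin μ - 2μ² cos μ > 0`.
-/

open Real Set

noncomputable def cotRadicand (μ : ℝ) : ℝ := 2 * μ * cot μ + 1 - μ ^ 2

noncomputable def criticalDefect (μ : ℝ) : ℝ :=
  -1 + 2 * μ ^ 2 - 3 * μ * cot μ + μ ^ 2 * (sin μ)⁻¹ ^ 2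

noncomputable def criticalDefectDerivNum (x : ℝ) : ℝ :=
  4 * x * sin x ^ 3 - 3 * cos x * sin x ^ 2 + 5 * x * sin x - 2 * x ^ 2 * cos x

lemma criticalDefect_eq_zero_iff {μ : ℝ} :
    criticalDefect μ = 0 ↔ 1 = 2 * μ ^ 2 - 3 * μ * cot μ + μ ^ 2 * (sin μ)⁻¹ ^ 2 := by
  unfold criticalDefect
  constructor <;> intro h <;> linarith

lemma Real.hasDerivAt_cot {x : ℝ} (hs : sin x ≠ 0) : HasDerivAt cot (-(sin x ^ 2)⁻¹) x := by
  have h := (hasDerivAt_cos x).div (hasDerivAt_sin x) hs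
  rw [show cos / sin = cot from funext fun t => (cot_eq_cos_div_sin t).symm] at h
  refine h.congr_deriv ?_
  field_simp
  linear_combination -sin_sq_add_cos_sq x

lemma hasDerivAt_sq_mul_cotRadicand {x : ℝ} (hs : sin x ≠ 0) :
    HasDerivAt (fun t => t ^ 2 * cotRadicand t) (-2 * x * criticalDefect x) x := by
  have h := (hasDerivAt_pow 2 x).mul
    ((((hasDerivAt_id x).const_mul 2).mul (hasDerivAt_cot hs)).add_const 1 |>.sub
      (hasDerivAt_pow 2 x))
  refine (h.congr_deriv ?_).congr_of_eventuallyEq (.of_forall fun t => rfl)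
  simp only [criticalDefect, Pi.mul_apply, Pi.sub_apply, id, cot_eq_cos_div_sin]
  field_simp
  ring

lemma hasDerivAt_criticalDefect {x : ℝ} (hs : sin x ≠ 0) :
    HasDerivAt criticalDefect (criticalDefectDerivNum x / sin x ^ 3) x := by
  have hcsc : HasDerivAt (fun t => (sin t)⁻¹) (-cos x / sin x ^ 2) x :=
    ((hasDerivAt_sin x).inv hs).congr_deriv (by ring)
  have h := ((((hasDerivAt_pow 2 x).const_mul 2).const_add (-1)).sub
    (((hasDerivAt_id x).mul (hasDerivAt_cot hs)).const_mul 3)).add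
      ((hasDerivAt_pow 2 x).mul (hcsc.pow 2))
  refine (h.congr_deriv ?_).congr_of_eventuallyEq (.of_forall fun t => ?_)
  · simp only [criticalDefectDerivNum, Pi.pow_apply, id, cot_eq_cos_div_sin, Nat.reduceSub,
      pow_one]
    field_simp
    ring
  · simp only [criticalDefect, Pi.add_apply, Pi.sub_apply, Pi.mul_apply, Pi.pow_apply, id]
    ring

-- Taylor bounds for `sin` and `cos` reduce this to a polynomial inequality in `x`.
lemma criticalDefectDerivNum_pos_of_le_one {x : ℝ} (hx : 0 < x) (h1 : x ≤ 1) :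
    0 < criticalDefectDerivNum x := by
  have hsl : x - x ^ 3 / 4 < sin x := by nlinarith [sin_gt_sub_cube hx, pow_pos hx 3]
  have hsu : sin x < x := sin_lt hx
  have hcu : cos x ≤ 1 - x ^ 2 / 2 + x ^ 4 * (5 / 96) := by
    have hcb := abs_le.mp (cos_bound (x := x) (by rwa [abs_of_pos hx]))
    rw [abs_of_pos hx] at hcb
    linarith [hcb.2]
  have hc0 : 0 < cos x := cos_pos_of_mem_Ioo ⟨by linarith [pi_gt_three], by linarith [pi_gt_three]⟩
  have hq : 0 < x - x ^ 3 / 4 := by nlinarith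
  have hs2 : sin x ^ 2 ≤ x ^ 2 := by nlinarith
  have A : cos x * (3 * sin x ^ 2 + 2 * x ^ 2) ≤ cos x * (5 * x ^ 2) := by
    nlinarith [mul_le_mul_of_nonneg_left hs2 hc0.le]
  have B : cos x * (5 * x ^ 2) ≤ (1 - x ^ 2 / 2 + x ^ 4 * (5 / 96)) * (5 * x ^ 2) :=
    mul_le_mul_of_nonneg_right hcu (by positivity)
  have C : 4 * x * (x - x ^ 3 / 4) ^ 3 ≤ 4 * x * sin x ^ 3 := by
    have := pow_le_pow_left₀ hq.le hsl.le 3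
    nlinarith
  have D : 5 * x * (x - x ^ 3 / 4) ≤ 5 * x * sin x := by nlinarith
  have key : 0 < 4 * x * (x - x ^ 3 / 4) ^ 3 + 5 * x * (x - x ^ 3 / 4)
      - (1 - x ^ 2 / 2 + x ^ 4 * (5 / 96)) * (5 * x ^ 2) := by
    have h34 : 3 / 4 ≤ 1 - x ^ 2 / 4 := by nlinarith
    have h27 : 27 / 64 ≤ (1 - x ^ 2 / 4) ^ 3 := by
      have := pow_le_pow_left₀ (by norm_num) h34 3
      norm_num at this ⊢; linarith
    nlinarith [mul_le_mul_of_nonneg_left h27 (by positivity : (0:ℝ) ≤ 4 * x ^ 4), pow_pos hx 4]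
  unfold criticalDefectDerivNum
  nlinarith

lemma criticalDefectDerivNum_pos_of_one_lt {x : ℝ} (h1 : 1 < x) (h2 : x ≤ π / 2) :
    0 < criticalDefectDerivNum x := by
  have hpi : π < 3.15 := pi_lt_d2
  have hs : 0 < sin x := sin_pos_of_pos_of_lt_pi (by linarith) (by linarith [pi_pos])
  have hs1 : sin 1 ≤ sin x :=
    strictMonoOn_sin.monotoneOn ⟨by linarith [pi_gt_three], by linarith [pi_gt_three]⟩
      ⟨by linarith [pi_gt_three], h2⟩ h1.le
  have hs1' : 3 / 4 < sin 1 := by nlinarith [sin_gt_sub_cube one_pos]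
  have hc1 : cos x ≤ cos 1 := cos_le_cos_of_nonneg_of_le_pi zero_le_one (by linarith) h1.le
  have hc0 : 0 ≤ cos x := cos_nonneg_of_mem_Icc ⟨by linarith [pi_pos], h2⟩
  unfold criticalDefectDerivNum
  nlinarith [cos_one_le, sin_le_one x, mul_pos (zero_lt_one.trans h1) hs, pow_pos hs 3,
    mul_le_mul_of_nonneg_left (by nlinarith [sin_le_one x] : sin x ^ 2 ≤ 1) hc0,
    mul_le_mul_of_nonneg_left (by nlinarith : x ^ 2 ≤ (3.15 / 2) ^ 2) hc0]

lemma criticalDefectDerivNum_pos_of_pi_div_two_lt {x : ℝ} (h2 : π / 2 < x) (hπ : x < π) :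
    0 < criticalDefectDerivNum x := by
  have hx : 0 < x := by linarith [pi_pos]
  have hs : 0 < sin x := sin_pos_of_pos_of_lt_pi hx hπ
  have hc : cos x ≤ 0 := cos_nonpos_of_pi_div_two_le_of_le h2.le (by linarith)
  unfold criticalDefectDerivNum
  nlinarith [mul_pos hx hs, pow_pos hs 3, mul_pos (mul_pos hx hs) hs, sq_nonneg x]

lemma criticalDefectDerivNum_pos {x : ℝ} (hx : 0 < x) (hπ : x < π) :
    0 < criticalDefectDerivNum x := by
  rcases le_or_gt x 1 with h1 | h1
  · exact criticalDefectDerivNum_pos_of_le_one hx h1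
  rcases le_or_gt x (π / 2) with h2 | h2
  · exact criticalDefectDerivNum_pos_of_one_lt h1 h2
  · exact criticalDefectDerivNum_pos_of_pi_div_two_lt h2 hπ

lemma strictMonoOn_criticalDefect : StrictMonoOn criticalDefect (Ioo 0 π) := by
  have hs : ∀ x ∈ Ioo 0 π, 0 < sin x := fun x hx => sin_pos_of_pos_of_lt_pi hx.1 hx.2
  refine strictMonoOn_of_deriv_pos (convex_Ioo 0 π)
    (fun x hx => (hasDerivAt_criticalDefect (hs x hx).ne').continuousAt.continuousWithinAt)
    fun x hx => ?_
  rw [interior_Ioo] at hx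
  rw [(hasDerivAt_criticalDefect (hs x hx).ne').deriv]
  exact div_pos (criticalDefectDerivNum_pos hx.1 hx.2) (pow_pos (hs x hx) 3)

lemma cotRadicand_pos_of_le_one {x : ℝ} (hx : 0 < x) (h1 : x ≤ 1) : 0 < cotRadicand x := by
  have hs : 0 < sin x := sin_pos_of_pos_of_lt_pi hx (by linarith [pi_gt_three])
  have hc : 0 < cos x := cos_pos_of_mem_Ioo ⟨by linarith [pi_gt_three], by linarith [pi_gt_three]⟩
  have hratio : 1 ≤ x / sin x := (one_le_div hs).mpr (sin_lt hx).le
  have hcot : x * cot x = cos x * (x / sin x) := by rw [cot_eq_cos_div_sin]; ring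
  unfold cotRadicand
  nlinarith [one_sub_sq_div_two_le_cos (x := x), mul_le_mul_of_nonneg_left hratio hc.le]

lemma continuousOn_cotRadicand : ContinuousOn cotRadicand (Ioo 0 π) := fun x hx => by
  have hcot : ContinuousAt cot x :=
    (hasDerivAt_cot (sin_pos_of_pos_of_lt_pi hx.1 hx.2).ne').continuousAt
  unfold cotRadicand
  fun_prop

lemma cotRadicand_pos_of_forall_ne_zero {b μ : ℝ} (hb : b ≤ π)
    (hne : ∀ x ∈ Ioo 0 b, cotRadicand x ≠ 0) (hμ : μ ∈ Ioo 0 b) : 0 < cotRadicand μ := by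
  have ha : min 1 (μ / 2) ∈ Ioo 0 b :=
    ⟨lt_min one_pos (half_pos hμ.1), by linarith [min_le_right 1 (μ / 2), hμ.1, hμ.2]⟩
  by_contra! hneg
  obtain ⟨x, hx, hx0⟩ := isPreconnected_Ioo.intermediate_value hμ ha
    (continuousOn_cotRadicand.mono (Ioo_subset_Ioo_right hb))
    ⟨hneg, (cotRadicand_pos_of_le_one ha.1 (min_le_left _ _)).le⟩
  exact hne x hx hx0

theorem stmt8_general (μ₂ : ℝ) (hπ : μ₂ < Real.pi)
    (hmin : ∀ μ ∈ Set.Ioo (0 : ℝ) μ₂, 2 * μ * Real.cot μ + 1 - μ ^ 2 ≠ 0)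
    (f : ℝ → ℝ)
    (hf : ∀ μ, f μ = μ * Real.sqrt (2 * μ * Real.cot μ + 1 - μ ^ 2))
    (μs : ℝ) (hμs : μs ∈ Set.Ioo (0 : ℝ) μ₂)
    (hmax : ∀ μ ∈ Set.Icc (0 : ℝ) μ₂, f μ ≤ f μs) :
    (1 = 2 * μs ^ 2 - 3 * μs * Real.cot μs + μs ^ 2 * ((Real.sin μs)⁻¹) ^ 2) ∧
    (∀ μ ∈ Set.Ioo (0 : ℝ) μ₂,
      1 = 2 * μ ^ 2 - 3 * μ * Real.cot μ + μ ^ 2 * ((Real.sin μ)⁻¹) ^ 2 → μ = μs) ∧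
    (∀ μ ∈ Set.Ioo (0 : ℝ) μ₂, deriv f μ = 0 →
      deriv (fun x => f x ^ 2) μ =
        -2 * μ * (-1 + 2 * μ ^ 2 - 3 * μ * Real.cot μ + μ ^ 2 * ((Real.sin μ)⁻¹) ^ 2)) := by
  have hJ : Ioo 0 μ₂ ⊆ Ioo 0 π := Ioo_subset_Ioo_right hπ.le
  have hf' : ∀ μ, f μ = μ * √(cotRadicand μ) := hf
  have hderiv : ∀ μ ∈ Ioo 0 μ₂,
      HasDerivAt (fun x => f x ^ 2) (-2 * μ * criticalDefect μ) μ := fun μ hμ => by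
    refine (hasDerivAt_sq_mul_cotRadicand
      (sin_pos_of_pos_of_lt_pi (hJ hμ).1 (hJ hμ).2).ne').congr_of_eventuallyEq ?_
    filter_upwards [Ioo_mem_nhds hμ.1 hμ.2] with x hx
    rw [hf', mul_pow, sq_sqrt (cotRadicand_pos_of_forall_ne_zero hπ.le hmin hx).le]
  have hcrit : criticalDefect μs = 0 := by
    have hloc : IsLocalMax (fun x => f x ^ 2) μs := by
      filter_upwards [Ioo_mem_nhds hμs.1 hμs.2] with x hx
      have hfx : 0 ≤ f x := (hf' x).symm ▸ mul_nonneg hx.1.le (sqrt_nonneg _)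
      exact pow_le_pow_left₀ hfx (hmax x (Ioo_subset_Icc_self hx)) 2
    simpa [hμs.1.ne'] using hloc.hasDerivAt_eq_zero (hderiv μs hμs)
  refine ⟨criticalDefect_eq_zero_iff.mp hcrit, fun μ hμ hμcrit => ?_,
    fun μ hμ _ => (hderiv μ hμ).deriv⟩
  exact strictMonoOn_criticalDefect.injOn (hJ hμ) (hJ hμs)
    ((criticalDefect_eq_zero_iff.mpr hμcrit).trans hcrit.symm)

/-- The maximizer `μ_s` of `f(μ) = μ√(2μcot(μ) + 1 - μ²)` on `[0, μ₂]` is the unique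
solution in `(0, μ₂)` of `1 = 2μ² - 3μcot(μ) + μ²csc²(μ)`, and at any critical point
of `f` in `(0, μ₂)` one has `(f²)'(μ) = -2μ(-1 + 2μ² - 3μcot(μ) + μ²csc²(μ))`. -/
theorem stmt8 (μ₂ : ℝ) (h0 : 0 < μ₂) (hπ : μ₂ < Real.pi)
    (hz : 2 * μ₂ * Real.cot μ₂ + 1 - μ₂ ^ 2 = 0)
    (hmin : ∀ μ ∈ Set.Ioo (0 : ℝ) μ₂, 2 * μ * Real.cot μ + 1 - μ ^ 2 ≠ 0)
    (f : ℝ → ℝ)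
    (hf : ∀ μ, f μ = μ * Real.sqrt (2 * μ * Real.cot μ + 1 - μ ^ 2))
    (μs : ℝ) (hμs : μs ∈ Set.Ioo (0 : ℝ) μ₂)
    (hmax : ∀ μ ∈ Set.Icc (0 : ℝ) μ₂, f μ ≤ f μs) :
    (1 = 2 * μs ^ 2 - 3 * μs * Real.cot μs + μs ^ 2 * ((Real.sin μs)⁻¹) ^ 2) ∧
    (∀ μ ∈ Set.Ioo (0 : ℝ) μ₂,
      1 = 2 * μ ^ 2 - 3 * μ * Real.cot μ + μ ^ 2 * ((Real.sin μ)⁻¹) ^ 2 → μ = μs) ∧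
    (∀ μ ∈ Set.Ioo (0 : ℝ) μ₂, deriv f μ = 0 →
      deriv (fun x => f x ^ 2) μ =
        -2 * μ * (-1 + 2 * μ ^ 2 - 3 * μ * Real.cot μ + μ ^ 2 * ((Real.sin μ)⁻¹) ^ 2)) :=
  stmt8_general μ₂ hπ hmin f hf μs hμs hmax
end

section
/- Let w ∈ ℂ and τ ∈ ℝ, and suppose the 2×2 matrix M_w = [[w − w² + τe^w, −w − w² + τe^{−w}], [−we^w − w²e^w − τ, we^{−w} − w²e^{−w} − τ]] is the zero matrix. Then τ = 0 and w = 0. -/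
/-!
Multiplying the (2,2) entry by `e^w` turns it into `τ e^w = w - w²`, while the (1,1) entry says
`τ e^w = w² - w`. Hence `τ = 0` and `w² = w`, and the (1,2) entry, which reduces to `-w - w² = 0`,
rules out `w = 1`.
-/

open Complex

theorem Complex.mul_exp_eq_of_mul_exp_neg_eq {x c w : ℂ} (h : x * exp (-w) = c) :
    c * exp w = x := by
  rw [← h, mul_assoc, ← exp_add, neg_add_cancel, exp_zero, mul_one]

theorem stmt14_general (w : ℂ) (τ : ℝ)
    (h11 : w - w ^ 2 + (τ : ℂ) * Complex.exp w = 0)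
    (h12 : -w - w ^ 2 + (τ : ℂ) * Complex.exp (-w) = 0)
    (h22 : w * Complex.exp (-w) - w ^ 2 * Complex.exp (-w) - (τ : ℂ) = 0) :
    τ = 0 ∧ w = 0 := by
  have hτ_exp : (τ : ℂ) * exp w = w - w ^ 2 :=
    mul_exp_eq_of_mul_exp_neg_eq (by linear_combination h22)
  have hw_sq : w ^ 2 = w := by linear_combination (hτ_exp - h11) / 2
  have hτ : (τ : ℂ) = 0 := by
    have h : (τ : ℂ) * exp w = 0 := by linear_combination (hτ_exp + h11) / 2
    exact (mul_eq_zero.mp h).resolve_right (exp_ne_zero w)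
  refine ⟨mod_cast hτ, ?_⟩
  have h2w : 2 * w = 0 := by linear_combination -h12 - hw_sq + exp (-w) * hτ
  exact (mul_eq_zero.mp h2w).resolve_left two_ne_zero

/-- If all four entries of the boundary-condition matrix `M_w` vanish, then `τ = 0`
and `w = 0`. -/
theorem stmt14 (w : ℂ) (τ : ℝ)
    (h11 : w - w ^ 2 + (τ : ℂ) * Complex.exp w = 0)
    (h12 : -w - w ^ 2 + (τ : ℂ) * Complex.exp (-w) = 0)
    (h21 : -w * Complex.exp w - w ^ 2 * Complex.exp w - (τ : ℂ) = 0)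
    (h22 : w * Complex.exp (-w) - w ^ 2 * Complex.exp (-w) - (τ : ℂ) = 0) :
    τ = 0 ∧ w = 0 :=
  stmt14_general w τ h11 h12 h22
end

section
/- Let μ_s ∈ (0, π) solve 1 = 2μ² − 3μ cot μ + μ² csc²μ and let μ_p ∈ (0, π/2) be the smallest positive solution of cot μ = μ. Then τ_p := μ_p/sin(μ_p) < τ_s := √(2μ_s³ cot μ_s + μ_s² − μ_s⁴); numerically τ_p ≈ 1.1349 < τ_s ≈ 1.1474. -/
/-!
The squares of both sides are values of `g μ = 2μ³ cot μ + μ² - μ⁴ = f(μ)²`: `g μp = μp² (1 + μp²)`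
because `cot μp = μp`, and the equation for `μs` is `g' μs = 0`. In terms of `q = μ cot μ` that
equation reads `q² - 3q + 3μ² = 1`, which turns `g μs` into `(1 + 3q - q²)(q + 1)(q + 2) / 9`,
increasing in `q` on `(0, 1)`. Alternating Taylor bounds for `sin` and `cos` then give
`11/16 < q` at `μs` and `μp² < 0.744`, which separate the two values at `13/10`.
-/

open Real Finset

noncomputable def cosTaylor (n : ℕ) (x : ℝ) : ℝ :=
  ∑ k ∈ range n, (-1) ^ k * (x ^ (2 * k) / (2 * k).factorial)

noncomputable def sinTaylor (n : ℕ) (x : ℝ) : ℝ :=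
  ∑ k ∈ range n, (-1) ^ k * (x ^ (2 * k + 1) / (2 * k + 1).factorial)

theorem hasDerivAt_pow_div_factorial (m : ℕ) (x : ℝ) :
    HasDerivAt (fun y : ℝ => y ^ (m + 1) / (m + 1).factorial) (x ^ m / m.factorial) x := by
  refine ((hasDerivAt_pow (m + 1) x).div_const _).congr_deriv ?_
  rw [Nat.factorial_succ, Nat.cast_mul]
  field_simp
  push_cast
  ring

theorem hasDerivAt_sinTaylor (n : ℕ) (x : ℝ) : HasDerivAt (sinTaylor n) (cosTaylor n x) x :=
  HasDerivAt.fun_sum fun k _ => (hasDerivAt_pow_div_factorial (2 * k) x).const_mul _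

theorem hasDerivAt_cosTaylor_succ (n : ℕ) (x : ℝ) :
    HasDerivAt (cosTaylor (n + 1)) (-sinTaylor n x) x := by
  have h : cosTaylor (n + 1) = fun y => ∑ k ∈ range n,
      (-1 : ℝ) ^ (k + 1) * (y ^ (2 * k + 1 + 1) / (2 * k + 1 + 1).factorial) + 1 := by
    ext y
    simp [cosTaylor, sum_range_succ', mul_add]
  rw [h]
  refine (HasDerivAt.fun_sum (u := range n) fun k _ =>
    (hasDerivAt_pow_div_factorial (2 * k + 1) x).const_mul ((-1 : ℝ) ^ (k + 1))).add_const 1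
    |>.congr_deriv ?_
  simp [sinTaylor, ← sum_neg_distrib, pow_succ]

theorem nonneg_of_hasDerivAt_of_nonneg {f f' : ℝ → ℝ} (hf : ∀ y, HasDerivAt f (f' y) y)
    (h0 : f 0 = 0) (hf' : ∀ y, 0 ≤ y → 0 ≤ f' y) {x : ℝ} (hx : 0 ≤ x) : 0 ≤ f x := by
  have hmono : MonotoneOn f (Set.Ici 0) :=
    monotoneOn_of_hasDerivWithinAt_nonneg (convex_Ici 0)
      (fun y _ => (hf y).continuousAt.continuousWithinAt)
      (fun y _ => (hf y).hasDerivWithinAt) (fun y hy => hf' y (interior_subset hy))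
  simpa [h0] using hmono Set.self_mem_Ici hx hx

theorem sin_taylor_bound_of_cos_taylor_bound {n : ℕ}
    (hcos : ∀ y, 0 ≤ y → 0 ≤ (-1) ^ n * (cos y - cosTaylor n y)) {x : ℝ} (hx : 0 ≤ x) :
    0 ≤ (-1) ^ n * (sin x - sinTaylor n x) :=
  nonneg_of_hasDerivAt_of_nonneg
    (fun y => ((hasDerivAt_sin y).sub (hasDerivAt_sinTaylor n y)).const_mul _)
    (by simp [sinTaylor]) hcos hx

theorem cos_taylor_bound_of_sin_taylor_bound {n : ℕ}
    (hsin : ∀ y, 0 ≤ y → 0 ≤ (-1) ^ n * (sin y - sinTaylor n y)) {x : ℝ} (hx : 0 ≤ x) :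
    0 ≤ (-1) ^ (n + 1) * (cos x - cosTaylor (n + 1) x) := by
  refine nonneg_of_hasDerivAt_of_nonneg
    (fun y => ((hasDerivAt_cos y).sub (hasDerivAt_cosTaylor_succ n y)).const_mul _)
    (by simp [cosTaylor, sum_range_succ']) (fun y hy => ?_) hx
  convert hsin y hy using 1
  ring

theorem cos_sin_taylor_bounds (n : ℕ) {x : ℝ} (hx : 0 ≤ x) :
    0 ≤ (-1) ^ (n + 1) * (cos x - cosTaylor (n + 1) x) ∧
      0 ≤ (-1) ^ (n + 1) * (sin x - sinTaylor (n + 1) x) := by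
  induction n generalizing x with
  | zero =>
    have hcos (y : ℝ) : 0 ≤ (-1) ^ 1 * (cos y - cosTaylor 1 y) := by
      simp [cosTaylor, cos_le_one]
    exact ⟨hcos x, sin_taylor_bound_of_cos_taylor_bound (fun y _ => hcos y) hx⟩
  | succ n ih =>
    have hcos (y : ℝ) (hy : 0 ≤ y) :=
      cos_taylor_bound_of_sin_taylor_bound (fun z hz => (ih hz).2) hy
    exact ⟨hcos x hx, sin_taylor_bound_of_cos_taylor_bound hcos hx⟩

theorem cos_le_one_sub_sq_div_two_add_pow_four_div {x : ℝ} (hx : 0 ≤ x) :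
    cos x ≤ 1 - x ^ 2 / 2 + x ^ 4 / 24 := by
  have h := (cos_sin_taylor_bounds 2 hx).1
  norm_num [cosTaylor, sum_range_succ, Nat.factorial] at h
  linarith

theorem sin_le_sub_cube_add_pow_five_div {x : ℝ} (hx : 0 ≤ x) :
    sin x ≤ x - x ^ 3 / 6 + x ^ 5 / 120 := by
  have h := (cos_sin_taylor_bounds 2 hx).2
  norm_num [sinTaylor, sum_range_succ, Nat.factorial] at h
  linarith

theorem one_sub_sq_div_two_add_pow_four_div_sub_pow_six_div_le_cos {x : ℝ} (hx : 0 ≤ x) :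
    1 - x ^ 2 / 2 + x ^ 4 / 24 - x ^ 6 / 720 ≤ cos x := by
  have h := (cos_sin_taylor_bounds 3 hx).1
  norm_num [cosTaylor, sum_range_succ, Nat.factorial] at h
  linarith

theorem mul_cos_lt_sin {x : ℝ} (hx : x ∈ Set.Ioo 0 π) : x * cos x < sin x := by
  rcases lt_or_ge x (π / 2) with hx2 | hx2
  · have hcos : 0 < cos x := cos_pos_of_mem_Ioo ⟨by linarith [pi_pos, hx.1], hx2⟩
    have h := lt_tan hx.1 hx2
    rwa [tan_eq_sin_div_cos, lt_div_iff₀ hcos] at h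
  · have hcos : cos x ≤ 0 := cos_nonpos_of_pi_div_two_le_of_le hx2 (by linarith [hx.2])
    nlinarith [sin_pos_of_pos_of_lt_pi hx.1 hx.2, hx.1]

theorem mul_cot_lt_one {x : ℝ} (hx : x ∈ Set.Ioo 0 π) : x * cot x < 1 := by
  rw [cot_eq_cos_div_sin, mul_div_assoc', div_lt_one (sin_pos_of_pos_of_lt_pi hx.1 hx.2)]
  exact mul_cos_lt_sin hx

theorem sq_div_sin_eq_of_cot_eq_self {μ : ℝ} (hμ : sin μ ≠ 0) (h : cot μ = μ) :
    (μ / sin μ) ^ 2 = μ ^ 2 * (1 + μ ^ 2) := by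
  rw [cot_eq_cos_div_sin, div_eq_iff hμ] at h
  rw [div_pow, div_eq_iff (pow_ne_zero 2 hμ)]
  linear_combination (-μ ^ 2) * sin_sq_add_cos_sq μ + (μ ^ 2 * (cos μ + μ * sin μ)) * h

theorem sq_lt_of_cot_eq_self {μ : ℝ} (hμ : μ ∈ Set.Ioo 0 (π / 2)) (h : cot μ = μ) :
    μ ^ 2 < 744 / 1000 := by
  obtain ⟨hμ0, hμπ⟩ := hμ
  have hsin : 0 < sin μ := sin_pos_of_pos_of_lt_pi hμ0 (by linarith [pi_pos])
  have hcos : cos μ = μ * sin μ := by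
    rwa [cot_eq_cos_div_sin, div_eq_iff hsin.ne'] at h
  have hcube : μ * (μ - μ ^ 3 / 6) ≤ μ * sin μ :=
    mul_le_mul_of_nonneg_left (sin_ge_sub_cube hμ0.le) hμ0.le
  have hquartic := cos_le_one_sub_sq_div_two_add_pow_four_div hμ0.le
  have hsq : μ ^ 2 < 64 / 25 := by nlinarith [pi_lt_d2]
  by_contra! hge
  -- `-1 + 3t/2 - 5t²/24 ≤ 0` with `t = μ²`, whose smaller root is `0.7434…`
  nlinarith [mul_nonneg (sub_nonneg.2 hge) (sub_nonneg.2 hsq.le)]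

theorem sq_div_sin_lt_of_cot_eq_self {μ : ℝ} (hμ : μ ∈ Set.Ioo 0 (π / 2)) (h : cot μ = μ) :
    (μ / sin μ) ^ 2 < 13 / 10 := by
  have hsin : sin μ ≠ 0 := (sin_pos_of_pos_of_lt_pi hμ.1 (by linarith [hμ.2, pi_pos])).ne'
  rw [sq_div_sin_eq_of_cot_eq_self hsin h]
  nlinarith [sq_lt_of_cot_eq_self hμ h, sq_nonneg μ]

theorem mul_cot_sq_sub_three_mul_add_three_mul_sq {μ : ℝ} (hμ : sin μ ≠ 0)
    (h : 1 = 2 * μ ^ 2 - 3 * μ * cot μ + μ ^ 2 * ((sin μ)⁻¹) ^ 2) :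
    (μ * cot μ) ^ 2 - 3 * (μ * cot μ) + 3 * μ ^ 2 = 1 := by
  have hcsc : ((sin μ)⁻¹) ^ 2 = 1 + cot μ ^ 2 := by
    rw [cot_eq_cos_div_sin]
    field_simp
    linear_combination -sin_sq_add_cos_sq μ
  rw [hcsc] at h
  linear_combination -h

theorem lt_mul_cot {μ : ℝ} (hμ : μ ∈ Set.Ioo 0 π)
    (h : (μ * cot μ) ^ 2 - 3 * (μ * cot μ) + 3 * μ ^ 2 = 1) : 11 / 16 < μ * cot μ := by
  set q := μ * cot μ with hq
  obtain ⟨hμ0, hμπ⟩ := hμ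
  have hsin : 0 < sin μ := sin_pos_of_pos_of_lt_pi hμ0 hμπ
  have hqsin : q * sin μ = μ * cos μ := by
    rw [hq, cot_eq_cos_div_sin]
    field_simp
  by_contra! hq0
  -- `3μ² = 1 + 3q - q² ≤ 663/256`, and for such `μ` the Taylor bounds give `μ cot μ > 11/16`.
  have hμ2 : μ ^ 2 ≤ 663 / 768 := by nlinarith
  have hμ1 : μ ≤ 1 := by nlinarith
  have hcos := mul_le_mul_of_nonneg_left
    (one_sub_sq_div_two_add_pow_four_div_sub_pow_six_div_le_cos hμ0.le) hμ0.le
  have hsin5 := sin_le_sub_cube_add_pow_five_div hμ0.le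
  have : q * sin μ ≤ 11 / 16 * sin μ := mul_le_mul_of_nonneg_right hq0 hsin.le
  nlinarith [pow_pos hμ0 3, pow_pos hμ0 5]

theorem critical_value_eq {μ : ℝ} (h : (μ * cot μ) ^ 2 - 3 * (μ * cot μ) + 3 * μ ^ 2 = 1) :
    2 * μ ^ 3 * cot μ + μ ^ 2 - μ ^ 4 =
      (1 + 3 * (μ * cot μ) - (μ * cot μ) ^ 2) * (μ * cot μ + 1) * (μ * cot μ + 2) / 9 := by
  linear_combination
    (2 * (μ * cot μ) + 1 - μ ^ 2 - (1 + 3 * (μ * cot μ) - (μ * cot μ) ^ 2) / 3) / 3 * h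

theorem thirteen_tenths_lt_critical_value {q : ℝ} (hq0 : 11 / 16 < q) (hq1 : q < 1) :
    13 / 10 < (1 + 3 * q - q ^ 2) * (q + 1) * (q + 2) / 9 := by
  nlinarith [mul_pos (sub_pos.2 hq0) (sub_pos.2 hq1), mul_pos (sub_pos.2 hq0) (sub_pos.2 hq0)]

theorem stmt17_general (μs μp : ℝ)
    (hμs : μs ∈ Set.Ioo 0 Real.pi)
    (hseq : 1 = 2 * μs ^ 2 - 3 * μs * Real.cot μs + μs ^ 2 * ((Real.sin μs)⁻¹) ^ 2)
    (hμp : μp ∈ Set.Ioo 0 (Real.pi / 2))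
    (hpeq : Real.cot μp = μp) :
    μp / Real.sin μp < Real.sqrt (2 * μs ^ 3 * Real.cot μs + μs ^ 2 - μs ^ 4) := by
  have hτp : 0 ≤ μp / sin μp :=
    (div_pos hμp.1 (sin_pos_of_pos_of_lt_pi hμp.1 (by linarith [hμp.2, pi_pos]))).le
  have hrel := mul_cot_sq_sub_three_mul_add_three_mul_sq
    (sin_pos_of_pos_of_lt_pi hμs.1 hμs.2).ne' hseq
  rw [lt_sqrt hτp, critical_value_eq hrel]
  exact (sq_div_sin_lt_of_cot_eq_self hμp hpeq).trans
    (thirteen_tenths_lt_critical_value (lt_mul_cot hμs hrel) (mul_cot_lt_one hμs))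

/-- `τ_p < τ_s`: for `μ_s ∈ (0, π)` solving `1 = 2μ² - 3μcot(μ) + μ²csc²(μ)` and
`μ_p ∈ (0, π/2)` the smallest positive solution of `cot μ = μ`, one has
`μ_p/sin(μ_p) < √(2μ_s³cot(μ_s) + μ_s² - μ_s⁴)`. -/
theorem stmt17 (μs μp : ℝ)
    (hμs : μs ∈ Set.Ioo 0 Real.pi)
    (hseq : 1 = 2 * μs ^ 2 - 3 * μs * Real.cot μs + μs ^ 2 * ((Real.sin μs)⁻¹) ^ 2)
    (hμp : μp ∈ Set.Ioo 0 (Real.pi / 2))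
    (hpeq : Real.cot μp = μp)
    (hpmin : ∀ μ ∈ Set.Ioo 0 μp, Real.cot μ ≠ μ) :
    μp / Real.sin μp < Real.sqrt (2 * μs ^ 3 * Real.cot μs + μs ^ 2 - μs ^ 4) :=
  stmt17_general μs μp hμs hseq hμp hpeq
end

section
/- Let μ ∈ (0, π/2) with μ > μ_p, where μ_p is the smallest positive solution of cot μ = μ, and let f(μ) = μ√(2μ cot μ + 1 − μ²). Then the function v⁺(x) = cos(μx) − ((f(μ)cos μ + μ²)/(μ + f(μ)sin μ)) sin(μx) has a zero in the open interval (0,1); consequently v⁺ changes sign on [0,1]. -/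
/-!
The coefficient `c = (f cos μ + μ²)/(μ + f sin μ)` satisfies `c sin μ > cos μ` exactly when
`μ tan μ > 1`, the term in `f` cancelling. Since `x ↦ x tan x` is strictly increasing on
`[0, π/2)` and equals `1` at `μ_p`, this holds for `μ > μ_p`. Then `v⁺(0) = 1 > 0 > v⁺(1)`, and the
intermediate value theorem gives a zero in `(0, 1)`.
-/

open Real Set

lemma mul_tan_strictMonoOn : StrictMonoOn (fun x => x * tan x) (Ico 0 (π / 2)) := by
  rintro x ⟨hx0, hx⟩ y ⟨-, hy⟩ hxy
  exact mul_lt_mul'' hxy (tan_lt_tan_of_nonneg_of_lt_pi_div_two hx0 hy hxy) hx0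
    (tan_nonneg_of_nonneg_of_le_pi_div_two hx0 hx.le)

lemma mul_tan_eq_one_of_cot_eq_self {p : ℝ} (hp0 : p ≠ 0) (hp : cot p = p) : p * tan p = 1 := by
  rw [cot_eq_cos_div_sin] at hp
  have hsin : sin p ≠ 0 := fun h => hp0 (by simp [h] at hp; exact hp.symm)
  have hcos : cos p ≠ 0 := fun h => hp0 (by simp [h] at hp; exact hp.symm)
  rw [tan_eq_sin_div_cos]
  nth_rw 1 [← hp]
  field_simp

lemma cos_lt_div_mul_sin {μ a : ℝ} (hμ0 : 0 < μ) (hμ : μ < π / 2) (ha : 0 ≤ a)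
    (htan : 1 < μ * tan μ) :
    cos μ < (a * cos μ + μ ^ 2) / (μ + a * sin μ) * sin μ := by
  have hsin : 0 < sin μ := sin_pos_of_pos_of_lt_pi hμ0 (by linarith [pi_pos])
  have hcos : 0 < cos μ := cos_pos_of_mem_Ioo ⟨by linarith [pi_pos], hμ⟩
  have hcos_lt : cos μ < μ * sin μ := by
    rwa [tan_eq_sin_div_cos, ← mul_div_assoc, one_lt_div hcos] at htan
  rw [div_mul_eq_mul_div, lt_div_iff₀ (by positivity)]
  linarith [mul_lt_mul_of_pos_left hcos_lt hμ0]

lemma exists_cos_sub_mul_sin_eq_zero {μ c : ℝ} (hc : cos μ < c * sin μ) :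
    ∃ x ∈ Ioo (0 : ℝ) 1, cos (μ * x) - c * sin (μ * x) = 0 := by
  have hcont : ContinuousOn (fun x => cos (μ * x) - c * sin (μ * x)) (Icc 0 1) := by fun_prop
  exact intermediate_value_Ioo' zero_le_one hcont ⟨by simpa using hc, by simp⟩

theorem stmt19_general (μp μ : ℝ)
    (hμp : μp ∈ Set.Ioo 0 (Real.pi / 2))
    (hpeq : Real.cot μp = μp)
    (hμ : μ ∈ Set.Ioo 0 (Real.pi / 2)) (hgt : μp < μ)
    (f : ℝ → ℝ)
    (hf : ∀ ν, f ν = ν * Real.sqrt (2 * ν * Real.cot ν + 1 - ν ^ 2))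
    (v : ℝ → ℝ)
    (hv : ∀ x, v x = Real.cos (μ * x) -
      (f μ * Real.cos μ + μ ^ 2) / (μ + f μ * Real.sin μ) * Real.sin (μ * x)) :
    (∃ x ∈ Set.Ioo (0 : ℝ) 1, v x = 0) ∧
    (∃ x ∈ Set.Icc (0 : ℝ) 1, 0 < v x) ∧
    (∃ x ∈ Set.Icc (0 : ℝ) 1, v x < 0) := by
  obtain ⟨hμ0, hμ⟩ := hμ
  have htan : 1 < μ * tan μ := by
    rw [← mul_tan_eq_one_of_cot_eq_self hμp.1.ne' hpeq]
    exact mul_tan_strictMonoOn ⟨hμp.1.le, hμp.2⟩ ⟨hμ0.le, hμ⟩ hgt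
  have hf0 : 0 ≤ f μ := hf μ ▸ mul_nonneg hμ0.le (sqrt_nonneg _)
  have hc := cos_lt_div_mul_sin hμ0 hμ hf0 htan
  obtain rfl : v = _ := funext hv
  exact ⟨exists_cos_sub_mul_sin_eq_zero hc, ⟨0, by norm_num, by simp⟩,
    ⟨1, by norm_num, by simpa using hc⟩⟩

/-- For `μ ∈ (0, π/2)` with `μ > μ_p` (the smallest positive solution of `cot μ = μ`),
the function `v⁺(x) = cos(μx) - ((f(μ)cos μ + μ²)/(μ + f(μ)sin μ))sin(μx)`, where
`f(μ) = μ√(2μcot(μ) + 1 - μ²)`, has a zero in `(0, 1)`; consequently `v⁺` changes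
sign on `[0, 1]`. -/
theorem stmt19 (μp μ : ℝ)
    (hμp : μp ∈ Set.Ioo 0 (Real.pi / 2))
    (hpeq : Real.cot μp = μp)
    (hpmin : ∀ ν ∈ Set.Ioo 0 μp, Real.cot ν ≠ ν)
    (hμ : μ ∈ Set.Ioo 0 (Real.pi / 2)) (hgt : μp < μ)
    (f : ℝ → ℝ)
    (hf : ∀ ν, f ν = ν * Real.sqrt (2 * ν * Real.cot ν + 1 - ν ^ 2))
    (v : ℝ → ℝ)
    (hv : ∀ x, v x = Real.cos (μ * x) -
      (f μ * Real.cos μ + μ ^ 2) / (μ + f μ * Real.sin μ) * Real.sin (μ * x)) :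
    (∃ x ∈ Set.Ioo (0 : ℝ) 1, v x = 0) ∧
    (∃ x ∈ Set.Icc (0 : ℝ) 1, 0 < v x) ∧
    (∃ x ∈ Set.Icc (0 : ℝ) 1, v x < 0) :=
  stmt19_general μp μ hμp hpeq hμ hgt f hf v hv
end
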